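/- Let L be a finite graded lattice of rank n whose proper part has nonzero (n-2)-nd reduced homology over k. Then for every k ∈ {0,1,...,n}, L has at least binom(n,k) good elements of rank k, where an element x of rank j is called good if x = 0̂ or the order complex of the open interval (0̂, x) has nonzero (j-2)-nd reduced homology over k. -/

import Mathlib

set_option maxSynthPendingDepth 2

open Finset

variable {α : Type*}

/-- A `j`-vertex simplex of the order complex of `s ⊆ α`: a strictly increasing
`j`-tuple of elements of `s` (for `j = 0` this is the unique empty simplex). -/
def OrderedSimplex [Preorder α] (s : Set α) (j : ℕ) : Type _ :=
  {f : Fin j → α // StrictMono f ∧ ∀ i, f i ∈ s}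

/-- The module of simplicial chains with `j` vertices (i.e. of degree `j - 1`)
of the order complex of `s`, with coefficients in `K`.  Since degree `j = 0`
corresponds to the empty simplex, this is the *augmented* chain complex. -/
abbrev SimpChains (K : Type*) [CommRing K] [Preorder α] (s : Set α) (j : ℕ) :=
  OrderedSimplex s j →₀ K

/-- The `i`-th face of a simplex (delete the `i`-th vertex). -/
def OrderedSimplex.face [Preorder α] {s : Set α} {j : ℕ}
    (σ : OrderedSimplex s (j + 1)) (i : Fin (j + 1)) : OrderedSimplex s j :=
  ⟨σ.1 ∘ Fin.succAbove i, σ.2.1.comp (Fin.strictMono_succAbove i), fun _ => σ.2.2 _⟩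

/-- The simplicial boundary map (for `j = 0` it is the augmentation). -/
noncomputable def simpBoundary (K : Type*) [CommRing K] [Preorder α] (s : Set α) (j : ℕ) :
    SimpChains K s (j + 1) →ₗ[K] SimpChains K s j :=
  Finsupp.lsum K fun σ => ∑ i : Fin (j + 1), ((-1 : K) ^ (i : ℕ)) • Finsupp.lsingle (σ.face i)

/-- Cycles with `j` vertices (for `j = 0` every chain is a cycle). -/
noncomputable def simpCycles (K : Type*) [CommRing K] [Preorder α] (s : Set α) :
    (j : ℕ) → Submodule K (SimpChains K s j)
  | 0 => ⊤
  | (i + 1) => LinearMap.ker (simpBoundary K s i)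

/-- Boundaries with `j` vertices. -/
noncomputable def simpBoundaries (K : Type*) [CommRing K] [Preorder α] (s : Set α) (j : ℕ) :
    Submodule K (SimpChains K s j) :=
  LinearMap.range (simpBoundary K s j)

/-- `ReducedHomology K s j` is the reduced simplicial homology group
`H̃_{j-1}(Δ(s); K)` of the order complex of `s` (the index `j` counts vertices,
so `j = 0` gives `H̃₋₁` and `j = n - 1` gives `H̃_{n-2}`). -/
noncomputable def ReducedHomology (K : Type*) [CommRing K] [Preorder α] (s : Set α) (j : ℕ) :=
  ↥(simpCycles K s j) ⧸ (simpBoundaries K s j).comap (simpCycles K s j).subtype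

noncomputable instance (K : Type*) [CommRing K] [Preorder α] (s : Set α) (j : ℕ) :
    AddCommGroup (ReducedHomology K s j) := by unfold ReducedHomology; infer_instance

noncomputable instance (K : Type*) [CommRing K] [Preorder α] (s : Set α) (j : ℕ) :
    Module K (ReducedHomology K s j) := by unfold ReducedHomology; infer_instance

/-- The proper part `L ∖ {⊥, ⊤}` of a bounded poset. -/
def properPart (α : Type*) [Preorder α] [BoundedOrder α] : Set α :=
  {x | x ≠ ⊥ ∧ x ≠ ⊤}

/-- The flag `f`-vector entry `f_P(S)`: the number of chains in the proper part
of `P` whose set of ranks is exactly `S`. -/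
noncomputable def flagf (α : Type*) [Preorder α] [BoundedOrder α] [GradeMinOrder ℕ α]
    (S : Finset ℕ) : ℕ :=
  Nat.card {C : Finset α // IsChain (· ≤ ·) (C : Set α) ∧ (↑C ⊆ properPart α) ∧
    C.image (grade ℕ) = S}

/-- The multinomial coefficient `α_n(S) = n! / (s₁!·(s₂-s₁)!⋯(n-s_l)!)`
for `S = {s₁ < s₂ < ⋯ < s_l} ⊆ [n-1]`; it equals `f_{B_n}(S)`. -/
def alphaMulti (n : ℕ) (S : Finset ℕ) : ℕ :=
  n.factorial /
    ((S.sort (· ≤ ·) ++ [n]).zipWith (fun b a => (b - a).factorial)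
      (0 :: S.sort (· ≤ ·))).prod

/-- An element `x` of a graded bounded poset is *good* if `x = ⊥` or the order
complex of the open interval `(⊥, x)` has nontrivial top reduced homology
`H̃_{ρ(x)-2}` over `K`. -/
def IsGoodElement (K : Type*) [CommRing K] [Preorder α] [OrderBot α] [GradeMinOrder ℕ α]
    (x : α) : Prop :=
  x = ⊥ ∨ Nontrivial (ReducedHomology K (Set.Ioo (⊥ : α) x) (grade ℕ x - 1))

/-!
Fix a nonzero top cycle `z` of the order complex of the proper part; the simplices in its support
are maximal chains. Every vertex of such a chain is good: restricting `z` to the simplices ending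
in the top vertex `y` of the chain gives a nonzero top cycle of `(⊥, y)`, and one recurses into
`(⊥, y)`. Since `∂z = 0`, a chain in the support can be changed at any single rank without leaving
the support. In a family of maximal chains of length `n` closed under such exchanges, taking meets
of chains that differ at one rank shows that some atom `a` and some coatom `y` of the family
satisfy `a ≰ y`; the chains through `y` and those through `a` then contribute disjointly
`binom(n-1, k)` and `binom(n-1, k-1)` elements of rank `k`.
-/

section Chains
variable {K : Type*} [CommRing K] [Preorder α] {s : Set α} {j : ℕ}

theorem ReducedHomology.nontrivial_iff :
    Nontrivial (ReducedHomology K s j) ↔ ¬ simpCycles K s j ≤ simpBoundaries K s j :=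
  Submodule.Quotient.nontrivial_iff.trans (not_congr Submodule.comap_subtype_eq_top)

theorem simpBoundaries_eq_bot [IsEmpty (OrderedSimplex s (j + 1))] :
    simpBoundaries K s j = ⊥ := by
  rw [simpBoundaries, Subsingleton.elim (simpBoundary K s j) 0, LinearMap.range_zero]

@[simp]
theorem OrderedSimplex.face_val (σ : OrderedSimplex s (j + 1)) (i : Fin (j + 1)) :
    (σ.face i).1 = σ.1 ∘ i.succAbove :=
  rfl

theorem OrderedSimplex.face_eq_face_iff {σ τ : OrderedSimplex s (j + 1)} {i : Fin (j + 1)} :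
    σ.face i = τ.face i ↔ ∀ k ≠ i, σ.1 k = τ.1 k := by
  refine ⟨fun h k hk => ?_, fun h => Subtype.ext (funext fun l => h _ (Fin.succAbove_ne i l))⟩
  obtain ⟨l, rfl⟩ := Fin.exists_succAbove_eq hk
  exact congrFun (congrArg Subtype.val h) l

theorem simpBoundary_single (σ : OrderedSimplex s (j + 1)) (r : K) :
    simpBoundary K s j (Finsupp.single σ r) =
      ∑ i : Fin (j + 1), (-1 : K) ^ (i : ℕ) • Finsupp.single (σ.face i) r := by
  simp only [simpBoundary, Finsupp.lsum_single, LinearMap.coe_sum, Finset.sum_apply,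
    LinearMap.smul_apply, Finsupp.lsingle_apply]

open scoped Classical in
theorem simpBoundary_apply (z : SimpChains K s (j + 1)) (ρ : OrderedSimplex s j) :
    simpBoundary K s j z ρ =
      ∑ σ ∈ z.support, ∑ i, if σ.face i = ρ then (-1) ^ (i : ℕ) * z σ else 0 := by
  simp only [simpBoundary, Finsupp.lsum_apply, Finsupp.sum, Finsupp.finsetSum_apply,
    LinearMap.sum_apply, LinearMap.smul_apply, Finsupp.lsingle_apply, Finsupp.smul_apply,
    Finsupp.single_apply, smul_eq_mul, mul_ite, mul_zero]

end Chains

section RestrictLast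
variable {K : Type*} [CommRing K] [Preorder α] {a x y : α} {j : ℕ}

def OrderedSimplex.init (σ : OrderedSimplex (Set.Ioo a x) (j + 1)) (h : σ.1 (Fin.last j) = y) :
    OrderedSimplex (Set.Ioo a y) j :=
  ⟨Fin.init σ.1, σ.2.1.comp Fin.strictMono_castSucc,
    fun k => ⟨(σ.2.2 _).1, h ▸ σ.2.1 (Fin.castSucc_lt_last k)⟩⟩

theorem OrderedSimplex.init_injective {σ τ : OrderedSimplex (Set.Ioo a x) (j + 1)}
    (hσ : σ.1 (Fin.last j) = y) (hτ : τ.1 (Fin.last j) = y) (h : σ.init hσ = τ.init hτ) :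
    σ = τ := by
  have hinit : Fin.init σ.1 = Fin.init τ.1 := congrArg Subtype.val h
  apply Subtype.ext
  rw [← Fin.snoc_init_self σ.1, ← Fin.snoc_init_self τ.1, hinit, hσ, hτ]

theorem OrderedSimplex.face_castSucc_last (σ : OrderedSimplex (Set.Ioo a x) (j + 2))
    (i : Fin (j + 1)) : (σ.face i.castSucc).1 (Fin.last j) = σ.1 (Fin.last (j + 1)) := by
  simp [Fin.castSucc_ne_last]

theorem OrderedSimplex.init_face_castSucc (σ : OrderedSimplex (Set.Ioo a x) (j + 2))
    (i : Fin (j + 1)) (h : σ.1 (Fin.last (j + 1)) = y) :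
    (σ.face i.castSucc).init ((σ.face_castSucc_last i).trans h) = (σ.init h).face i :=
  Subtype.ext (funext fun l => by simp [OrderedSimplex.init, OrderedSimplex.face, Fin.init])

open scoped Classical in
variable (K a x y j) in
noncomputable def restrictLast :
    SimpChains K (Set.Ioo a x) (j + 1) →ₗ[K] SimpChains K (Set.Ioo a y) j :=
  Finsupp.lsum K fun σ => if h : σ.1 (Fin.last j) = y then Finsupp.lsingle (σ.init h) else 0

open scoped Classical in
theorem restrictLast_single (σ : OrderedSimplex (Set.Ioo a x) (j + 1)) (r : K) :
    restrictLast K a x y j (Finsupp.single σ r) =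
      if h : σ.1 (Fin.last j) = y then Finsupp.single (σ.init h) r else 0 := by
  simp only [restrictLast, Finsupp.lsum_single]
  split_ifs <;> rfl

theorem restrictLast_apply_init (z : SimpChains K (Set.Ioo a x) (j + 1))
    (σ : OrderedSimplex (Set.Ioo a x) (j + 1)) (h : σ.1 (Fin.last j) = y) :
    restrictLast K a x y j z (σ.init h) = z σ := by
  classical
  conv_lhs => rw [← Finsupp.sum_single z]
  rw [Finsupp.sum, map_sum, Finsupp.finsetSum_apply, Finset.sum_eq_single σ]
  · simp [restrictLast_single, h]
  · intro τ _ hτσ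
    rw [restrictLast_single]
    split_ifs with hτ
    · exact Finsupp.single_eq_of_ne (fun he => hτσ (OrderedSimplex.init_injective hτ h he.symm))
    · rfl
  · intro hσ
    rw [Finsupp.notMem_support_iff.1 hσ, Finsupp.single_zero, map_zero, Finsupp.zero_apply]

/-- Since `y ⋖ x`, no simplex of `(a, x)` has `y` as its second-to-last vertex. -/
theorem simpBoundary_comp_restrictLast (hyx : y ⋖ x) :
    simpBoundary K (Set.Ioo a y) j ∘ₗ restrictLast K a x y (j + 1) =
      restrictLast K a x y j ∘ₗ simpBoundary K (Set.Ioo a x) (j + 1) := by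
  refine Finsupp.lhom_ext fun σ r => ?_
  have hlast : restrictLast K a x y j (Finsupp.single (σ.face (Fin.last (j + 1))) r) = 0 := by
    rw [restrictLast_single, dif_neg]
    intro h
    refine hyx.2 ?_ (σ.2.2 (Fin.last (j + 1))).2
    simpa [← h] using σ.2.1 (Fin.castSucc_lt_last (Fin.last j))
  rw [LinearMap.comp_apply, LinearMap.comp_apply, restrictLast_single, simpBoundary_single,
    map_sum, Fin.sum_univ_castSucc, map_smul, hlast, smul_zero, add_zero]
  simp_rw [map_smul, restrictLast_single]
  by_cases h : σ.1 (Fin.last (j + 1)) = y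
  · rw [dif_pos h, simpBoundary_single]
    refine Finset.sum_congr rfl fun i _ => ?_
    rw [dif_pos ((σ.face_castSucc_last i).trans h), σ.init_face_castSucc i h, Fin.val_castSucc]
  · simp [h, σ.face_castSucc_last]

theorem restrictLast_mem_simpCycles (hyx : y ⋖ x) {z : SimpChains K (Set.Ioo a x) (j + 1)}
    (hz : z ∈ simpCycles K (Set.Ioo a x) (j + 1)) :
    restrictLast K a x y j z ∈ simpCycles K (Set.Ioo a y) j := by
  cases j with
  | zero => exact Submodule.mem_top
  | succ j =>
    change simpBoundary K _ j (restrictLast K a x y (j + 1) z) = 0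
    rw [← LinearMap.comp_apply, simpBoundary_comp_restrictLast hyx, LinearMap.comp_apply,
      LinearMap.mem_ker.1 hz, map_zero]

end RestrictLast

section Graded
variable {K : Type*} [CommRing K] [PartialOrder α] [OrderBot α] [GradeMinOrder ℕ α] {x : α}
  {m : ℕ}

theorem OrderedSimplex.grade_apply (hx : grade ℕ x = m + 1) (σ : OrderedSimplex (Set.Ioo ⊥ x) m)
    (i : Fin m) : grade ℕ (σ.1 i) = i + 1 := by
  have hpos k : 0 < grade ℕ (σ.1 k) := by simpa using grade_strictMono (𝕆 := ℕ) (σ.2.2 k).1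
  have hlt k : grade ℕ (σ.1 k) - 1 < m := by
    have := hpos k
    have : grade ℕ (σ.1 k) < grade ℕ x := grade_strictMono (σ.2.2 k).2
    omega
  have hmono : StrictMono fun k => (⟨grade ℕ (σ.1 k) - 1, hlt k⟩ : Fin m) := fun k l hkl =>
    Fin.mk_lt_mk.2 (by have := grade_strictMono (𝕆 := ℕ) (σ.2.1 hkl); have := hpos k; omega)
  have : grade ℕ (σ.1 i) - 1 = i := congrArg Fin.val (hmono.apply_eq (x := i))
  have := hpos i
  omega

theorem OrderedSimplex.isEmpty_of_grade (hx : grade ℕ x = m + 1) :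
    IsEmpty (OrderedSimplex (Set.Ioo ⊥ x) (m + 1)) := by
  refine ⟨fun σ => ?_⟩
  have hmaps : ∀ i ∈ Finset.univ, grade ℕ (σ.1 i) ∈ Finset.Ioo 0 (m + 1) := fun i _ =>
    Finset.mem_Ioo.2 ⟨by simpa using grade_strictMono (𝕆 := ℕ) (σ.2.2 i).1,
      (grade_strictMono (σ.2.2 i).2).trans_eq hx⟩
  simpa using Finset.card_le_card_of_injOn _ hmaps
    ((grade_strictMono (𝕆 := ℕ)).comp σ.2.1).injective.injOn

theorem nontrivial_reducedHomology_of_grade (hx : grade ℕ x = m + 1)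
    {z : SimpChains K (Set.Ioo ⊥ x) m} (hz : z ∈ simpCycles K (Set.Ioo ⊥ x) m) (hz0 : z ≠ 0) :
    Nontrivial (ReducedHomology K (Set.Ioo ⊥ x) m) := by
  have := OrderedSimplex.isEmpty_of_grade hx
  rw [ReducedHomology.nontrivial_iff, simpBoundaries_eq_bot]
  exact fun h => hz0 ((Submodule.mem_bot K).1 (h hz))

theorem isGoodElement_of_mem_simpCycles (hx : grade ℕ x = m + 1)
    {z : SimpChains K (Set.Ioo ⊥ x) m} (hz : z ∈ simpCycles K (Set.Ioo ⊥ x) m) (hz0 : z ≠ 0) :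
    IsGoodElement K x :=
  Or.inr (by rw [hx, Nat.add_sub_cancel]; exact nontrivial_reducedHomology_of_grade hx hz hz0)

theorem isGoodElement_of_mem_support (hx : grade ℕ x = m + 1)
    {z : SimpChains K (Set.Ioo ⊥ x) m} (hz : z ∈ simpCycles K (Set.Ioo ⊥ x) m)
    {σ : OrderedSimplex (Set.Ioo ⊥ x) m} (hσ : z σ ≠ 0) (i : Fin m) :
    IsGoodElement K (σ.1 i) := by
  induction m generalizing x with
  | zero => exact i.elim0
  | succ m ih =>
    set y := σ.1 (Fin.last m)
    have hy : grade ℕ y = m + 1 := by simpa using σ.grade_apply hx (Fin.last m)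
    have hyx : y ⋖ x := covBy_iff_lt_covBy_grade.2 ⟨(σ.2.2 _).2, by
      rw [hx, hy]; exact Nat.covBy_iff_add_one_eq.2 rfl⟩
    have hz' := restrictLast_mem_simpCycles (y := y) hyx hz
    have hσ' : restrictLast K ⊥ x y m z (σ.init rfl) ≠ 0 := by
      rwa [restrictLast_apply_init]
    induction i using Fin.lastCases with
    | last => exact isGoodElement_of_mem_simpCycles hy hz' fun h => hσ' (by rw [h]; rfl)
    | cast k => exact ih hy hz' hσ' k

/-- The vertex of `σ.face i` in position `l` has grade `i.succAbove l + 1`, so a facet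
remembers which vertex was removed. -/
theorem OrderedSimplex.eq_of_face_eq_face (hx : grade ℕ x = m + 2)
    {σ τ : OrderedSimplex (Set.Ioo ⊥ x) (m + 1)} {i j : Fin (m + 1)}
    (h : σ.face i = τ.face j) : i = j := by
  refine Fin.succAbove_left_injective (funext fun l => Fin.ext ?_)
  have := congrArg (fun ρ : OrderedSimplex _ m => grade ℕ (ρ.1 l)) h
  simpa [σ.grade_apply hx, τ.grade_apply hx] using this

/-- The coefficients of the simplices with facet `c.face j` add up to zero in a cycle, and these
simplices are exactly the ones that agree with `c` off `j`. -/
theorem exists_exchange_of_simpBoundary_eq_zero (hx : grade ℕ x = m + 2)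
    {z : SimpChains K (Set.Ioo ⊥ x) (m + 1)} (hz : simpBoundary K _ m z = 0)
    {c : OrderedSimplex (Set.Ioo ⊥ x) (m + 1)} (hc : z c ≠ 0) (j : Fin (m + 1)) :
    ∃ σ, z σ ≠ 0 ∧ σ.1 j ≠ c.1 j ∧ ∀ i ≠ j, σ.1 i = c.1 i := by
  classical
  obtain ⟨σ, hσ, hσc, hface⟩ : ∃ σ, z σ ≠ 0 ∧ σ ≠ c ∧ σ.face j = c.face j := by
    by_contra! h
    have hsum := simpBoundary_apply z (c.face j)
    rw [hz, Finsupp.zero_apply, Finset.sum_eq_single c, Finset.sum_eq_single j, if_pos rfl]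
      at hsum
    · exact hc ((isUnit_neg_one.pow _).mul_right_eq_zero.1 hsum.symm)
    · exact fun i _ hij => if_neg fun he => hij (OrderedSimplex.eq_of_face_eq_face hx he)
    · exact fun hj => absurd (Finset.mem_univ j) hj
    · refine fun σ hσ hσc => Finset.sum_eq_zero fun i _ => if_neg fun he => ?_
      exact h σ (Finsupp.mem_support_iff.1 hσ) hσc
        (OrderedSimplex.eq_of_face_eq_face hx he ▸ he)
    · exact fun hc' => absurd (Finsupp.mem_support_iff.2 hc) hc'
  have hagree := OrderedSimplex.face_eq_face_iff.1 hface
  refine ⟨σ, hσ, fun hj => hσc (Subtype.ext (funext fun i => ?_)), hagree⟩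
  by_cases hij : i = j
  · exact hij ▸ hj
  · exact hagree i hij

end Graded

/-- Flags `c 0 ⋖ c 1 ⋖ ⋯ ⋖ c n` are encoded as functions `ℕ → α` whose values beyond `n` are
ignored. -/
structure IsExchangeClosed [Preorder α] (n : ℕ) (F : Set (ℕ → α)) : Prop where
  covBy : ∀ c ∈ F, ∀ i < n, c i ⋖ c (i + 1)
  exchange : ∀ c ∈ F, ∀ j, 0 < j → j < n → ∃ c' ∈ F, c' j ≠ c j ∧ ∀ i ≠ j, c' i = c i

namespace IsExchangeClosed
variable {n : ℕ} {F : Set (ℕ → α)}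

section Lattice
variable [Lattice α]

theorem apply_mono (hF : IsExchangeClosed n F) {c : ℕ → α} (hc : c ∈ F) {i j : ℕ} (hij : i ≤ j)
    (hjn : j ≤ n) : c i ≤ c j := by
  induction j, hij using Nat.le_induction with
  | base => exact le_rfl
  | succ j _ ih => exact (ih (by omega)).trans (hF.covBy c hc j (by omega)).le

/-- Two distinct elements covering `c i` and covered by `c (i + 2)` meet in `c i`. -/
theorem le_of_forall_le_succ (hF : IsExchangeClosed n F) {b : α} {i : ℕ} (hi : i + 1 < n)
    (hb : ∀ c ∈ F, b ≤ c (i + 1)) : ∀ c ∈ F, b ≤ c i := by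
  intro c hc
  obtain ⟨c', hc', hne, hagree⟩ := hF.exchange c hc (i + 1) (by omega) hi
  have hcov := hF.covBy c hc i (by omega)
  have hinf : c (i + 1) ⊓ c' (i + 1) = c i := by
    refine ((hcov.eq_or_eq (le_inf hcov.le ?_) inf_le_left).resolve_right fun h => ?_)
    · exact hagree i (by omega) ▸ (hF.covBy c' hc' i (by omega)).le
    · have hlt : c (i + 1) < c' (i + 1) := (inf_eq_left.1 h).lt_of_ne hne.symm
      refine (hF.covBy c hc (i + 1) hi).2 hlt ?_
      exact hagree (i + 2) (by omega) ▸ (hF.covBy c' hc' (i + 1) hi).lt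
  exact hinf ▸ le_inf (hb c hc) (hb c' hc')

theorem exists_not_le (hF : IsExchangeClosed (n + 2) F) (hne : F.Nonempty) :
    ∃ c ∈ F, ∃ c' ∈ F, ¬ c 1 ≤ c' (n + 1) := by
  by_contra! h
  obtain ⟨c, hc⟩ := hne
  have hdown : ∀ j ≤ n + 1, ∀ c' ∈ F, c 1 ≤ c' j := by
    intro j hj
    induction hj using Nat.decreasingInduction with
    | self => exact h c hc
    | of_succ j hj ih => exact hF.le_of_forall_le_succ (by omega) ih
  exact (hF.covBy c hc 0 (by omega)).lt.not_ge (hdown 0 (by omega) c hc)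

theorem restrict_last (hF : IsExchangeClosed (n + 1) F) (y : α) :
    IsExchangeClosed n {c ∈ F | c n = y} where
  covBy c hc i hi := hF.covBy c hc.1 i (by omega)
  exchange c hc j hj hjn := by
    obtain ⟨c', hc', hne, hagree⟩ := hF.exchange c hc.1 j hj (by omega)
    exact ⟨c', ⟨hc', (hagree n (by omega)).trans hc.2⟩, hne, hagree⟩

theorem shift_restrict_one (hF : IsExchangeClosed (n + 1) F) (a : α) :
    IsExchangeClosed n ((fun c i => c (i + 1)) '' {c ∈ F | c 1 = a}) where
  covBy := by
    rintro _ ⟨c, hc, rfl⟩ i hi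
    exact hF.covBy c hc.1 (i + 1) (by omega)
  exchange := by
    rintro _ ⟨c, hc, rfl⟩ j hj hjn
    obtain ⟨c', hc', hne, hagree⟩ := hF.exchange c hc.1 (j + 1) (by omega) (by omega)
    exact ⟨_, ⟨c', ⟨hc', (hagree 1 (by omega)).trans hc.2⟩, rfl⟩, hne,
      fun i hi => hagree (i + 1) (by omega)⟩

end Lattice

theorem choose_le_ncard_image [Lattice α] [Finite α] (hF : IsExchangeClosed n F)
    (hne : F.Nonempty) : ∀ k ≤ n, n.choose k ≤ ((fun c => c k) '' F).ncard := by
  induction n generalizing F with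
  | zero =>
    intro k hk
    obtain rfl := Nat.le_zero.1 hk
    exact (hne.image _).ncard_pos
  | succ n ih =>
    intro k hk
    rcases Nat.eq_zero_or_pos k with rfl | hk0
    · rw [Nat.choose_zero_right]
      exact (hne.image _).ncard_pos
    obtain rfl | hkn := hk.eq_or_lt
    · rw [Nat.choose_self]
      exact (hne.image _).ncard_pos
    obtain ⟨k, rfl⟩ : ∃ k', k = k' + 1 := ⟨k - 1, by omega⟩
    obtain ⟨n, rfl⟩ : ∃ n', n = n' + 1 := ⟨n - 1, by omega⟩
    obtain ⟨ca, hca, cy, hcy, hay⟩ := hF.exists_not_le hne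
    set A := (fun c => c k) '' ((fun c i => c (i + 1)) '' {c ∈ F | c 1 = ca 1})
    set B := (fun c => c (k + 1)) '' {c ∈ F | c (n + 1) = cy (n + 1)}
    have hA := ih (hF.shift_restrict_one (ca 1)) ⟨_, ⟨ca, ⟨hca, rfl⟩, rfl⟩⟩ k (by omega)
    have hB := ih (hF.restrict_last (cy (n + 1))) ⟨cy, hcy, rfl⟩ (k + 1) (by omega)
    have hdisj : Disjoint A B := by
      rw [Set.disjoint_left]
      rintro _ ⟨_, ⟨c, hc, rfl⟩, rfl⟩ ⟨c', hc', hcc'⟩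
      refine hay ?_
      calc ca 1 = c 1 := hc.2.symm
        _ ≤ c (k + 1) := hF.apply_mono hc.1 (by omega) (by omega)
        _ = c' (k + 1) := hcc'.symm
        _ ≤ c' (n + 1) := hF.apply_mono hc'.1 (by omega) (by omega)
        _ = cy (n + 1) := hc'.2
    have hsub : A ∪ B ⊆ (fun c => c (k + 1)) '' F := by
      refine Set.union_subset ?_ (Set.image_mono (Set.sep_subset _ _))
      rintro _ ⟨_, ⟨c, hc, rfl⟩, rfl⟩
      exact ⟨c, hc.1, rfl⟩
    calc (n + 2).choose (k + 1) = (n + 1).choose k + (n + 1).choose (k + 1) :=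
          Nat.choose_succ_succ _ _
      _ ≤ A.ncard + B.ncard := add_le_add hA hB
      _ = (A ∪ B).ncard := (Set.ncard_union_eq hdisj).symm
      _ ≤ _ := Set.ncard_le_ncard hsub

end IsExchangeClosed

def OrderedSimplex.toFlag [Preorder α] [BoundedOrder α] {s : Set α} {m : ℕ}
    (σ : OrderedSimplex s m) : ℕ → α
  | 0 => ⊥
  | i + 1 => if h : i < m then σ.1 ⟨i, h⟩ else ⊤

theorem properPart_eq_Ioo [PartialOrder α] [BoundedOrder α] :
    properPart α = Set.Ioo ⊥ ⊤ := by
  ext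
  simp [properPart, bot_lt_iff_ne_bot, lt_top_iff_ne_top]

section Flag
variable {K : Type*} [CommRing K] [PartialOrder α] [BoundedOrder α] [GradeMinOrder ℕ α] {m : ℕ}

theorem OrderedSimplex.grade_toFlag (hrank : grade ℕ (⊤ : α) = m + 1)
    (σ : OrderedSimplex (Set.Ioo (⊥ : α) ⊤) m) {i : ℕ} (hi : i ≤ m + 1) :
    grade ℕ (σ.toFlag i) = i := by
  cases i with
  | zero => simp [toFlag]
  | succ i =>
    simp only [toFlag]
    split_ifs with h
    · exact σ.grade_apply hrank ⟨i, h⟩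
    · rw [hrank]; omega

theorem OrderedSimplex.toFlag_covBy (hrank : grade ℕ (⊤ : α) = m + 1)
    (σ : OrderedSimplex (Set.Ioo (⊥ : α) ⊤) m) {i : ℕ} (hi : i ≤ m) :
    σ.toFlag i ⋖ σ.toFlag (i + 1) := by
  refine (covBy_iff_lt_covBy_grade (𝕆 := ℕ)).2 ⟨?_, ?_⟩
  · cases i with
    | zero =>
      refine bot_lt_iff_ne_bot.2 fun h => ?_
      simpa [h] using σ.grade_toFlag hrank (i := 1) (by omega)
    | succ i =>
      simp only [toFlag, dif_pos (show i < m by omega)]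
      split_ifs with h
      · exact σ.2.1 (Fin.mk_lt_mk.2 (Nat.lt_add_one i))
      · exact (σ.2.2 _).2
  · rw [σ.grade_toFlag hrank (by omega), σ.grade_toFlag hrank (by omega)]
    exact Nat.covBy_iff_add_one_eq.2 rfl

theorem OrderedSimplex.isGoodElement_toFlag (hrank : grade ℕ (⊤ : α) = m + 1)
    {z : SimpChains K (Set.Ioo (⊥ : α) ⊤) m} (hz : z ∈ simpCycles K (Set.Ioo ⊥ ⊤) m)
    {σ : OrderedSimplex (Set.Ioo (⊥ : α) ⊤) m} (hσ : z σ ≠ 0) (i : ℕ) :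
    IsGoodElement K (σ.toFlag i) := by
  cases i with
  | zero => exact Or.inl rfl
  | succ i =>
    simp only [toFlag]
    split_ifs with h
    · exact isGoodElement_of_mem_support hrank hz hσ ⟨i, h⟩
    · exact isGoodElement_of_mem_simpCycles hrank hz (ne_of_apply_ne (fun f => f σ) hσ)

theorem isExchangeClosed_toFlag (hrank : grade ℕ (⊤ : α) = m + 1)
    {z : SimpChains K (Set.Ioo (⊥ : α) ⊤) m} (hz : z ∈ simpCycles K (Set.Ioo ⊥ ⊤) m) :
    IsExchangeClosed (m + 1) (OrderedSimplex.toFlag '' {σ | z σ ≠ 0}) where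
  covBy := by
    rintro _ ⟨σ, -, rfl⟩ i hi
    exact σ.toFlag_covBy hrank (by omega)
  exchange := by
    rintro _ ⟨σ, hσ, rfl⟩ j hj hjm
    obtain ⟨j, rfl⟩ : ∃ j', j = j' + 1 := ⟨j - 1, by omega⟩
    obtain ⟨m, rfl⟩ : ∃ m', m = m' + 1 := ⟨m - 1, by omega⟩
    obtain ⟨τ, hτ, hne, hagree⟩ :=
      exists_exchange_of_simpBoundary_eq_zero hrank (LinearMap.mem_ker.1 hz) hσ ⟨j, by omega⟩
    refine ⟨τ.toFlag, ⟨τ, hτ, rfl⟩, ?_, ?_⟩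
    · simpa only [OrderedSimplex.toFlag, dif_pos (show j < m + 1 by omega)] using hne
    · rintro (_ | i) hi
      · rfl
      · simp only [OrderedSimplex.toFlag]
        split_ifs with h
        · exact hagree ⟨i, h⟩ fun he => hi (by simpa using he)
        · rfl

end Flag

theorem good_elements_count_general
    (n : ℕ)
    (α : Type*) [Lattice α] [BoundedOrder α] [Fintype α] [GradeMinOrder ℕ α]
    (hrank : grade ℕ (⊤ : α) = n)
    (K : Type*) [Field K]
    (hH : Nontrivial (ReducedHomology K (properPart α) (n - 1))) :
    ∀ k ≤ n, n.choose k ≤ Nat.card {x : α // grade ℕ x = k ∧ IsGoodElement K x} := by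
  intro k hk
  rw [← Set.coe_ofPred, Nat.card_coe_set_eq]
  cases n with
  | zero =>
    obtain rfl := Nat.le_zero.1 hk
    exact (Set.ncard_pos).2 ⟨⊥, grade_bot, Or.inl rfl⟩
  | succ m =>
    rw [properPart_eq_Ioo, Nat.add_sub_cancel, ReducedHomology.nontrivial_iff,
      SetLike.not_le_iff_exists] at hH
    obtain ⟨z, hz, hzB⟩ := hH
    have hz0 : z ≠ 0 := fun h => hzB (h ▸ Submodule.zero_mem _)
    obtain ⟨σ, hσ⟩ := Finsupp.support_nonempty_iff.2 hz0
    calc (m + 1).choose k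
        ≤ ((fun c => c k) '' (OrderedSimplex.toFlag '' {τ | z τ ≠ 0})).ncard :=
          (isExchangeClosed_toFlag hrank hz).choose_le_ncard_image
            ⟨_, σ, Finsupp.mem_support_iff.1 hσ, rfl⟩ k hk
      _ ≤ _ := Set.ncard_le_ncard <| by
          rintro _ ⟨_, ⟨τ, hτ, rfl⟩, rfl⟩
          exact ⟨τ.grade_toFlag hrank hk, τ.isGoodElement_toFlag hrank hz hτ k⟩

/-- **Proposition 2.1.**  A finite graded lattice `L` of rank `n` whose proper part has
nonzero reduced homology `H̃_{n-2}` over `K` has at least `binom(n,k)` good elements of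
rank `k`, for every `0 ≤ k ≤ n`. -/
theorem good_elements_count
    (n : ℕ) (hn : 1 ≤ n)
    (α : Type*) [Lattice α] [BoundedOrder α] [Fintype α] [GradeMinOrder ℕ α]
    (hrank : grade ℕ (⊤ : α) = n)
    (K : Type*) [Field K]
    (hH : Nontrivial (ReducedHomology K (properPart α) (n - 1))) :
    ∀ k ≤ n, n.choose k ≤ Nat.card {x : α // grade ℕ x = k ∧ IsGoodElement K x} :=
  good_elements_count_general n α hrank K hH
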